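/- Let k ≥ 3 be an odd integer. Then the state obtained by applying V_k at each of k sites (each site holding two of the 2k qubits, paired per site) to the 2k-qubit cat state (|00⟩^{⊗k}+|11⟩^{⊗k})/√2 is inconsistent; equivalently, the amplitude (1/√2)(∏_{i=1}^k (V_k)_{y_i,0} + ∏_{i=1}^k (V_k)_{y_i,3}) vanishes whenever y ∈ {0,1,2,3}^k is a constant string, i.e., for each c ∈ {0,1,2,3}, (V_k)_{c,0}^k + (V_k)_{c,3}^k = 0. -/

import Mathlib

open Matrix

/-- The 4×4 complex matrix `V_k` from the paper, with `R_k = cos(π/k)`, `I_k = sin(π/k)`,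
`R_{2k} = cos(π/(2k))`:
`(1/√(R_k+1)) · [[1/√2, 0, √R_k, e^{iπ/k}/√2], [1/√2, 0, −√R_k·e^{−iπ/k}, e^{−iπ/k}/√2],`
`[√R_k, 0, e^{−iπ/(2k)}·I_k/(i·√2·R_{2k}), −√R_k], [0, √(R_k+1), 0, 0]]`,
rows and columns indexed by two-bit strings `00,01,10,11` (encoded as `0,1,2,3`). -/
noncomputable def VMat (k : ℕ) : Matrix (Fin 4) (Fin 4) ℂ :=
  (1 / (Real.sqrt (Real.cos (Real.pi / k) + 1) : ℂ)) •
    !![1 / (Real.sqrt 2 : ℂ), 0, (Real.sqrt (Real.cos (Real.pi / k)) : ℂ),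
          Complex.exp (Complex.I * ((Real.pi : ℂ) / (k : ℂ))) / (Real.sqrt 2 : ℂ);
        1 / (Real.sqrt 2 : ℂ), 0,
          -((Real.sqrt (Real.cos (Real.pi / k)) : ℂ) *
              Complex.exp (-(Complex.I * ((Real.pi : ℂ) / (k : ℂ))))),
          Complex.exp (-(Complex.I * ((Real.pi : ℂ) / (k : ℂ)))) / (Real.sqrt 2 : ℂ);
        (Real.sqrt (Real.cos (Real.pi / k)) : ℂ), 0,
          Complex.exp (-(Complex.I * ((Real.pi : ℂ) / (2 * (k : ℂ))))) *
              (Real.sin (Real.pi / k) : ℂ) /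
            (Complex.I * (Real.sqrt 2 : ℂ) * (Real.cos (Real.pi / (2 * k)) : ℂ)),
          -(Real.sqrt (Real.cos (Real.pi / k)) : ℂ);
        0, (Real.sqrt (Real.cos (Real.pi / k) + 1) : ℂ), 0, 0]

/-!
Row by row, column `11` of `V_k` is column `00` multiplied by a `k`-th root of `-1`, namely
`e^{iπ/k}`, `e^{-iπ/k}`, `-1`, `-1` (the last row vanishes in both columns; `-1` is a
`k`-th root of `-1` because `k` is odd). Hence `(V_k)_{c,00}^k + (V_k)_{c,11}^k = 0` for every
row `c`, which is the amplitude on the constant string `c…c`.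
-/

open Complex

lemma pow_add_mul_pow_eq_zero {R : Type*} [CommRing R] {a z : R} {k : ℕ} (hz : z ^ k = -1) :
    a ^ k + (a * z) ^ k = 0 := by
  rw [mul_pow, hz]
  ring

lemma cexp_I_pi_div_pow_self {k : ℕ} (hk : k ≠ 0) :
    exp (I * (Real.pi / k)) ^ k = -1 := by
  rw [← exp_nat_mul, show (k : ℂ) * (I * (Real.pi / k)) = Real.pi * I by field_simp,
    exp_pi_mul_I]

lemma cexp_neg_I_pi_div_pow_self {k : ℕ} (hk : k ≠ 0) :
    exp (-(I * (Real.pi / k))) ^ k = -1 := by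
  rw [exp_neg, inv_pow, cexp_I_pi_div_pow_self hk, inv_neg, inv_one]

noncomputable def VMatPhase (k : ℕ) : Fin 4 → ℂ :=
  ![exp (I * (Real.pi / k)), exp (-(I * (Real.pi / k))), -1, -1]

lemma VMatPhase_pow_self {k : ℕ} (hk : Odd k) (c : Fin 4) : VMatPhase k c ^ k = -1 := by
  have hk0 : k ≠ 0 := hk.pos.ne'
  fin_cases c
  · exact cexp_I_pi_div_pow_self hk0
  · exact cexp_neg_I_pi_div_pow_self hk0
  · exact hk.neg_one_pow
  · exact hk.neg_one_pow

lemma VMat_apply_three (k : ℕ) (c : Fin 4) : VMat k c 3 = VMat k c 0 * VMatPhase k c := by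
  fin_cases c <;> simp [VMat, VMatPhase, Matrix.smul_apply] <;> ring

lemma VMat_pow_add_pow_eq_zero {k : ℕ} (hk : Odd k) (c : Fin 4) :
    VMat k c 0 ^ k + VMat k c 3 ^ k = 0 := by
  rw [VMat_apply_three]
  exact pow_add_mul_pow_eq_zero (VMatPhase_pow_self hk c)

theorem VMat_cat_inconsistent_general (k : ℕ) (hko : Odd k) :
    (∀ c : Fin 4, VMat k c 0 ^ k + VMat k c 3 ^ k = 0) ∧
      ∀ y : Fin k → Fin 4, (∃ c : Fin 4, ∀ i, y i = c) →
        (1 / (Real.sqrt 2 : ℂ)) * ((∏ i, VMat k (y i) 0) + ∏ i, VMat k (y i) 3) = 0 := by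
  refine ⟨VMat_pow_add_pow_eq_zero hko, ?_⟩
  rintro y ⟨c, hc⟩
  simp only [hc, Finset.prod_const, Finset.card_univ, Fintype.card_fin,
    VMat_pow_add_pow_eq_zero hko c, mul_zero]

/-- For an odd integer `k ≥ 3`, applying `V_k` at each of `k` sites (each holding two of the
`2k` qubits) to the cat state `(|00⟩^{⊗k}+|11⟩^{⊗k})/√2` yields an inconsistent state:
`(V_k)_{c,00}^k + (V_k)_{c,11}^k = 0` for every two-bit string `c`, so the amplitude
`(1/√2)(∏ᵢ (V_k)_{yᵢ,00} + ∏ᵢ (V_k)_{yᵢ,11})` vanishes on every constant string `y`. -/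
theorem VMat_cat_inconsistent (k : ℕ) (hk : 3 ≤ k) (hko : Odd k) :
    (∀ c : Fin 4, VMat k c 0 ^ k + VMat k c 3 ^ k = 0) ∧
      ∀ y : Fin k → Fin 4, (∃ c : Fin 4, ∀ i, y i = c) →
        (1 / (Real.sqrt 2 : ℂ)) * ((∏ i, VMat k (y i) 0) + ∏ i, VMat k (y i) 3) = 0 :=
  VMat_cat_inconsistent_general k hko
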